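/- Distance matrix determinant sign (Micchelli/Auer): Let x₁, …, x_N be N ≥ 2 distinct points in ℝ^P and let D be the N×N matrix with entries D_{ij} = ‖xᵢ − xⱼ‖ (Euclidean distance). Then (−1)^{N−1} det D > 0; in particular, D is invertible. -/

import Mathlib

open Finset

theorem Smon_eq {N P : ℕ} (z : Fin N → EuclideanSpace ℝ (Fin P)) (w : Fin N → ℝ) (k : ℕ) :
    ∑ i, ∑ j, w i * w j * (∑ p, z i p * z j p) ^ k
      = ∑ a : Fin k → Fin P, (∑ i, w i * ∏ m, z i (a m)) ^ 2 := by
  have expand : ∀ i j : Fin N, (∑ p, z i p * z j p) ^ k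
      = ∑ a : Fin k → Fin P, (∏ m, z i (a m)) * (∏ m, z j (a m)) := by
    intro i j
    rw [Fintype.sum_pow]
    exact Finset.sum_congr rfl fun a _ => by rw [← Finset.prod_mul_distrib]
  calc ∑ i, ∑ j, w i * w j * (∑ p, z i p * z j p) ^ k
      = ∑ i, ∑ j, ∑ a : Fin k → Fin P,
          (w i * ∏ m, z i (a m)) * (w j * ∏ m, z j (a m)) := by
        refine Finset.sum_congr rfl fun i _ => Finset.sum_congr rfl fun j _ => ?_
        rw [expand, Finset.mul_sum]
        exact Finset.sum_congr rfl fun a _ => by ring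
    _ = ∑ i, ∑ a : Fin k → Fin P, ∑ j,
          (w i * ∏ m, z i (a m)) * (w j * ∏ m, z j (a m)) :=
        Finset.sum_congr rfl fun i _ => Finset.sum_comm
    _ = ∑ a : Fin k → Fin P, ∑ i, ∑ j,
          (w i * ∏ m, z i (a m)) * (w j * ∏ m, z j (a m)) := Finset.sum_comm
    _ = ∑ a : Fin k → Fin P, (∑ i, w i * ∏ m, z i (a m)) ^ 2 := by
        refine Finset.sum_congr rfl fun a _ => ?_
        rw [sq, Finset.sum_mul_sum]

theorem interp {N P : ℕ} (z : Fin N → EuclideanSpace ℝ (Fin P)) (hz : Function.Injective z)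
    (w : Fin N → ℝ)
    (h : ∀ (k : ℕ) (a : Fin k → Fin P), ∑ i, w i * ∏ m, z i (a m) = 0) :
    w = 0 := by
  have C1 : ∀ e : Fin P → ℕ, ∑ i, w i * ∏ p, z i p ^ e p = 0 := by
    intro e
    have hcard : Fintype.card (Σ p : Fin P, Fin (e p)) = ∑ p, e p := by
      simp [Fintype.card_sigma]
    let σ : (Σ p : Fin P, Fin (e p)) ≃ Fin (∑ p, e p) := Fintype.equivFinOfCardEq hcard
    have key := h (∑ p, e p) (fun m => (σ.symm m).1)
    rw [← key]
    refine Finset.sum_congr rfl fun i _ => ?_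
    congr 1
    calc ∏ p, z i p ^ e p = ∏ p, ∏ _q : Fin (e p), z i p := by
          refine Finset.prod_congr rfl fun p _ => ?_
          rw [Finset.prod_const, Finset.card_univ, Fintype.card_fin]
      _ = ∏ s : Σ p : Fin P, Fin (e p), z i s.1 := by
          rw [← Finset.univ_sigma_univ, Finset.prod_sigma]
      _ = ∏ m, z i ((σ.symm m).1) := (Equiv.prod_comp σ.symm fun s => z i s.1).symm
  have C2 : ∀ q : MvPolynomial (Fin P) ℝ, ∑ i, w i * MvPolynomial.eval (z i) q = 0 := by
    intro q
    have heq : ∀ i : Fin N, MvPolynomial.eval (z i) q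
        = ∑ d ∈ q.support, MvPolynomial.coeff d q * ∏ p, z i p ^ d p := by
      intro i
      rw [MvPolynomial.eval_eq]
      refine Finset.sum_congr rfl fun d _ => ?_
      congr 1
      exact Finset.prod_subset (Finset.subset_univ _)
        (fun p _ hp => by simp [Finsupp.notMem_support_iff.1 hp])
    simp_rw [heq, Finset.mul_sum]
    rw [Finset.sum_comm]
    refine Finset.sum_eq_zero fun d _ => ?_
    have hpull : ∑ i, w i * (MvPolynomial.coeff d q * ∏ p, z i p ^ d p)
        = MvPolynomial.coeff d q * ∑ i, w i * ∏ p, z i p ^ (d p) := by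
      rw [Finset.mul_sum]; exact Finset.sum_congr rfl fun i _ => by ring
    rw [hpull, C1 (fun p => d p), mul_zero]
  funext i0
  classical
  let q : MvPolynomial (Fin P) ℝ :=
    ∏ j ∈ Finset.univ.erase i0,
      (∑ p, MvPolynomial.C (z i0 p - z j p) * (MvPolynomial.X p - MvPolynomial.C (z j p)))
  have heval : ∀ l : Fin N, MvPolynomial.eval (z l) q
      = ∏ j ∈ Finset.univ.erase i0, (∑ p, (z i0 p - z j p) * (z l p - z j p)) := by
    intro l
    simp [q, MvPolynomial.eval_prod]
  have hzero : ∀ l : Fin N, l ≠ i0 → MvPolynomial.eval (z l) q = 0 := by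
    intro l hl
    rw [heval]
    refine Finset.prod_eq_zero (Finset.mem_erase.2 ⟨hl, Finset.mem_univ l⟩) ?_
    simp
  have hpos : 0 < MvPolynomial.eval (z i0) q := by
    rw [heval]
    refine Finset.prod_pos fun j hj => ?_
    have hne : z i0 ≠ z j := fun hcon =>
      (Finset.mem_erase.1 hj).1 (hz hcon).symm
    have : ∃ p, z i0 p ≠ z j p := by
      by_contra hcon
      push_neg at hcon
      exact hne (PiLp.ext hcon)
    obtain ⟨p0, hp0⟩ := this
    have : ∀ p, 0 ≤ (z i0 p - z j p) * (z i0 p - z j p) := fun p => mul_self_nonneg _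
    refine Finset.sum_pos' (fun p _ => this p) ⟨p0, Finset.mem_univ p0, ?_⟩
    exact mul_self_pos.2 (sub_ne_zero.2 hp0)
  have := C2 q
  rw [Finset.sum_eq_single i0 (fun l _ hl => by rw [hzero l hl, mul_zero])
    (fun hl => absurd (Finset.mem_univ i0) hl)] at this
  have hw := (mul_eq_zero.1 this).resolve_right (ne_of_gt hpos)
  simpa using hw

theorem key_PD {N P : ℕ} (z : Fin N → EuclideanSpace ℝ (Fin P)) (hz : Function.Injective z)
    (w : Fin N → ℝ) (hw : w ≠ 0) :
    0 < ∑ i, ∑ j, w i * w j * Real.exp (∑ p, z i p * z j p) := by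
  classical
  -- exp as tsum
  have hexp : ∀ r : ℝ, Real.exp r = ∑' k : ℕ, r ^ k / k.factorial := by
    intro r
    rw [Real.exp_eq_exp_ℝ, NormedSpace.exp_eq_tsum_div]
  set c : Fin N → Fin N → ℝ := fun i j => ∑ p, z i p * z j p with hc
  have hsummable : ∀ i j : Fin N, Summable (fun k : ℕ => w i * w j * (c i j ^ k / k.factorial)) :=
    fun i j => (Real.summable_pow_div_factorial (c i j)).mul_left _
  have hswap : ∑ i, ∑ j, w i * w j * Real.exp (c i j)
      = ∑' k : ℕ, ∑ i, ∑ j, w i * w j * (c i j ^ k / k.factorial) := by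
    rw [Summable.tsum_finsetSum (fun i _ => summable_sum (fun j _ => hsummable i j))]
    refine Finset.sum_congr rfl fun i _ => ?_
    rw [Summable.tsum_finsetSum (fun j _ => hsummable i j)]
    refine Finset.sum_congr rfl fun j _ => ?_
    rw [hexp, ← tsum_mul_left]
  -- inner sums in terms of Smon
  have hterm : ∀ k : ℕ, ∑ i, ∑ j, w i * w j * (c i j ^ k / k.factorial)
      = (∑ a : Fin k → Fin P, (∑ i, w i * ∏ m, z i (a m)) ^ 2) / k.factorial := by
    intro k
    rw [← Smon_eq z w k, Finset.sum_div]
    refine Finset.sum_congr rfl fun i _ => ?_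
    rw [Finset.sum_div]
    exact Finset.sum_congr rfl fun j _ => by ring
  have hnonneg : ∀ k : ℕ, 0 ≤ ∑ i, ∑ j, w i * w j * (c i j ^ k / k.factorial) := by
    intro k
    rw [hterm k]
    exact div_nonneg (Finset.sum_nonneg fun a _ => sq_nonneg _) (Nat.cast_nonneg _)
  -- some term is positive
  have hexists : ∃ (k : ℕ) (a : Fin k → Fin P), (∑ i, w i * ∏ m, z i (a m)) ≠ 0 := by
    by_contra hcon
    push_neg at hcon
    exact hw (interp z hz w hcon)
  obtain ⟨k0, a0, ha0⟩ := hexists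
  have hpos : 0 < ∑ i, ∑ j, w i * w j * (c i j ^ k0 / k0.factorial) := by
    rw [hterm k0]
    refine div_pos ?_ (by positivity)
    refine Finset.sum_pos' (fun a _ => sq_nonneg _) ⟨a0, Finset.mem_univ a0, ?_⟩
    exact pow_pos (abs_pos.2 ha0) 2 |>.trans_le (by rw [sq_abs])
  rw [hswap]
  have hsum : Summable (fun k : ℕ => ∑ i, ∑ j, w i * w j * (c i j ^ k / k.factorial)) :=
    summable_sum (fun i _ => summable_sum (fun j _ => hsummable i j))
  exact Summable.tsum_pos hsum hnonneg k0 hpos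

theorem gauss_PD {N P : ℕ} (x : Fin N → EuclideanSpace ℝ (Fin P))
    (hx : Function.Injective x) (v : Fin N → ℝ) (hv : v ≠ 0) {s : ℝ} (hs : 0 < s) :
    0 < ∑ i, ∑ j, v i * v j * Real.exp (-(s * ∑ p, (x i p - x j p) ^ 2)) := by
  classical
  set c : ℝ := Real.sqrt (2 * s) with hc
  have hc2 : c * c = 2 * s := Real.mul_self_sqrt (by linarith)
  have hcne : c ≠ 0 := by
    intro h
    rw [h, mul_zero] at hc2
    linarith
  set z : Fin N → EuclideanSpace ℝ (Fin P) := fun i => c • x i with hzdef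
  have hzinj : Function.Injective z := by
    intro i j hij
    exact hx (smul_right_injective _ hcne hij)
  set w : Fin N → ℝ := fun i => v i * Real.exp (-(s * ∑ p, (x i p) ^ 2)) with hwdef
  have hwne : w ≠ 0 := by
    intro hcon
    apply hv
    funext i
    have := congrFun hcon i
    simp only [hwdef, Pi.zero_apply, mul_eq_zero] at this
    exact this.resolve_right (Real.exp_ne_zero _)
  have hterm : ∀ i j : Fin N, v i * v j * Real.exp (-(s * ∑ p, (x i p - x j p) ^ 2))
      = w i * w j * Real.exp (∑ p, z i p * z j p) := by
    intro i j
    have hz : ∀ p, z i p * z j p = (2 * s) * (x i p * x j p) := by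
      intro p
      simp only [hzdef, PiLp.smul_apply, smul_eq_mul]
      calc c * x i p * (c * x j p) = (c * c) * (x i p * x j p) := by ring
        _ = 2 * s * (x i p * x j p) := by rw [hc2]
    have hsum : ∑ p, z i p * z j p = (2 * s) * ∑ p, x i p * x j p := by
      rw [Finset.mul_sum]; exact Finset.sum_congr rfl fun p _ => hz p
    have hexpand : ∑ p, (x i p - x j p) ^ 2
        = ∑ p, (x i p) ^ 2 + ∑ p, (x j p) ^ 2 - 2 * ∑ p, x i p * x j p := by
      have h1 : ∀ p ∈ Finset.univ, (x i p - x j p) ^ 2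
          = ((x i p) ^ 2 + (x j p) ^ 2) - 2 * (x i p * x j p) := fun p _ => by ring
      rw [Finset.sum_congr rfl h1, Finset.sum_sub_distrib, Finset.sum_add_distrib,
        ← Finset.mul_sum]
    simp only [hwdef, hsum, hexpand]
    have key : ∀ A B C : ℝ, Real.exp (-(s * (A + B - 2 * C)))
        = Real.exp (-(s * A)) * Real.exp (-(s * B)) * Real.exp (2 * s * C) := by
      intro A B C
      rw [← Real.exp_add, ← Real.exp_add]
      congr 1
      ring
    rw [key]
    ring
  calc (0:ℝ) < ∑ i, ∑ j, w i * w j * Real.exp (∑ p, z i p * z j p) := key_PD z hzinj w hwne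
    _ = ∑ i, ∑ j, v i * v j * Real.exp (-(s * ∑ p, (x i p - x j p) ^ 2)) := by
        exact Finset.sum_congr rfl fun i _ => Finset.sum_congr rfl fun j _ => (hterm i j).symm

open MeasureTheory Set

noncomputable def gfun : ℝ → ℝ := fun u => (1 - Real.exp (-u)) * u ^ (-(3:ℝ)/2)

theorem gfun_meas : Measurable gfun :=
  (measurable_const.sub (Real.measurable_exp.comp measurable_neg)).mul
    (measurable_id.pow_const _)

theorem gfun_nonneg : ∀ u : ℝ, 0 ≤ u → 0 ≤ gfun u := by
  intro u hu
  unfold gfun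
  have h1 : Real.exp (-u) ≤ 1 := Real.exp_le_one_iff.2 (by linarith)
  have h2 : (0:ℝ) ≤ u ^ (-(3:ℝ)/2) := Real.rpow_nonneg hu _
  nlinarith

theorem gfun_pos : ∀ u : ℝ, 0 < u → 0 < gfun u := by
  intro u hu
  unfold gfun
  have h1 : Real.exp (-u) < 1 := Real.exp_lt_one_iff.2 (by linarith)
  have h2 : (0:ℝ) < u ^ (-(3:ℝ)/2) := Real.rpow_pos_of_pos hu _
  nlinarith

theorem gfun_integrable : IntegrableOn gfun (Ioi (0:ℝ)) := by
  have h1 : IntegrableOn gfun (Ioc (0:ℝ) 1) := by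
    have hmaj : IntegrableOn (fun u : ℝ => u ^ (-(1:ℝ)/2)) (Ioc (0:ℝ) 1) := by
      have := intervalIntegral.intervalIntegrable_rpow' (a := 0) (b := 1) (r := -(1:ℝ)/2) (by norm_num)
      rwa [intervalIntegrable_iff_integrableOn_Ioc_of_le zero_le_one] at this
    refine Integrable.mono' hmaj (gfun_meas.aestronglyMeasurable.restrict) ?_
    rw [ae_restrict_iff' measurableSet_Ioc]
    refine Filter.Eventually.of_forall fun u hu => ?_
    obtain ⟨hu0, hu1⟩ := hu
    rw [Real.norm_eq_abs, abs_of_nonneg (gfun_nonneg u hu0.le)]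
    have hexp : 1 - Real.exp (-u) ≤ u := by
      have := Real.add_one_le_exp (-u)
      linarith
    have h2 : (0:ℝ) ≤ u ^ (-(3:ℝ)/2) := Real.rpow_nonneg hu0.le _
    calc gfun u ≤ u * u ^ (-(3:ℝ)/2) := by
          unfold gfun
          exact mul_le_mul_of_nonneg_right hexp h2
      _ = u ^ (-(1:ℝ)/2) := by
          nth_rewrite 1 [← Real.rpow_one u]
          rw [← Real.rpow_add hu0]
          norm_num
  have h2 : IntegrableOn gfun (Ioi (1:ℝ)) := by
    have hmaj : IntegrableOn (fun u : ℝ => u ^ (-(3:ℝ)/2)) (Ioi (1:ℝ)) :=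
      integrableOn_Ioi_rpow_of_lt (by norm_num) zero_lt_one
    refine Integrable.mono' hmaj (gfun_meas.aestronglyMeasurable.restrict) ?_
    rw [ae_restrict_iff' measurableSet_Ioi]
    refine Filter.Eventually.of_forall fun u hu => ?_
    have hu0 : (0:ℝ) < u := lt_trans zero_lt_one hu
    rw [Real.norm_eq_abs, abs_of_nonneg (gfun_nonneg u hu0.le)]
    have hexp : 1 - Real.exp (-u) ≤ 1 := by
      have := Real.exp_nonneg (-u)
      linarith
    have h3 : (0:ℝ) ≤ u ^ (-(3:ℝ)/2) := Real.rpow_nonneg hu0.le _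
    calc gfun u ≤ 1 * u ^ (-(3:ℝ)/2) := mul_le_mul_of_nonneg_right hexp h3
      _ = u ^ (-(3:ℝ)/2) := one_mul _
  have := h1.union h2
  rwa [Ioc_union_Ioi_eq_Ioi zero_le_one] at this

theorem gfun_C_pos : 0 < ∫ u in Ioi (0:ℝ), gfun u := by
  rw [setIntegral_pos_iff_support_of_nonneg_ae ?_ gfun_integrable]
  · have hsub : Ioi (0:ℝ) ⊆ Function.support gfun ∩ Ioi 0 := fun u hu =>
      ⟨ne_of_gt (gfun_pos u hu), hu⟩
    calc (0:ENNReal) < volume (Ioi (0:ℝ)) := by rw [Real.volume_Ioi]; exact ENNReal.zero_lt_top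
      _ ≤ volume (Function.support gfun ∩ Ioi 0) := measure_mono hsub
  · filter_upwards [ae_restrict_mem measurableSet_Ioi] with u hu
    exact gfun_nonneg u (le_of_lt hu)

theorem rep_pt {r : ℝ} (hr : 0 < r) {s : ℝ} (hs0 : 0 < s) :
    (1 - Real.exp (-(s * r^2))) * s ^ (-(3:ℝ)/2) = r ^ (3:ℝ) * gfun (r^2 * s) := by
  have hr2 : (0:ℝ) < r^2 := by positivity
  unfold gfun
  rw [Real.mul_rpow (le_of_lt hr2) hs0.le]
  have h1 : (r^2 : ℝ) ^ (-(3:ℝ)/2) = r ^ (-(3:ℝ)) := by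
    rw [← Real.rpow_natCast r 2, ← Real.rpow_mul hr.le]
    norm_num
  have h2 : r ^ (3:ℝ) * r ^ (-(3:ℝ)) = 1 := by
    rw [← Real.rpow_add hr]; norm_num
  rw [h1, mul_comm (r^2) s]
  linear_combination (-((1 - Real.exp (-(s * r^2))) * s ^ (-(3:ℝ)/2))) * h2

theorem rep_integrable {r : ℝ} (hr : 0 < r) :
    IntegrableOn (fun s : ℝ => (1 - Real.exp (-(s * r^2))) * s ^ (-(3:ℝ)/2)) (Ioi 0) := by
  have hr2 : (0:ℝ) < r^2 := by positivity
  have hcomp : IntegrableOn (fun s : ℝ => gfun (r^2 * s)) (Ioi 0) := by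
    have := (integrableOn_Ioi_comp_mul_left_iff gfun 0 hr2).2
    rw [mul_zero] at this
    exact this gfun_integrable
  have hint : IntegrableOn (fun s : ℝ => r ^ (3:ℝ) * gfun (r^2 * s)) (Ioi 0) :=
    hcomp.const_mul _
  refine hint.congr_fun ?_ measurableSet_Ioi
  intro s hs
  exact (rep_pt hr hs).symm

theorem rep_integral {r : ℝ} (hr : 0 < r) :
    (∫ s in Ioi (0:ℝ), (1 - Real.exp (-(s * r^2))) * s ^ (-(3:ℝ)/2))
      = r * ∫ u in Ioi (0:ℝ), gfun u := by
  have hr2 : (0:ℝ) < r^2 := by positivity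
  have hpt : EqOn (fun s : ℝ => (1 - Real.exp (-(s * r^2))) * s ^ (-(3:ℝ)/2))
      (fun s : ℝ => r ^ (3:ℝ) * gfun (r^2 * s)) (Ioi 0) := fun s hs => rep_pt hr hs
  rw [setIntegral_congr_fun measurableSet_Ioi hpt]
  rw [MeasureTheory.integral_const_mul]
  rw [integral_comp_mul_left_Ioi gfun 0 hr2, mul_zero]
  have h3 : r ^ (3:ℝ) = r ^ (3:ℕ) := by
    rw [← Real.rpow_natCast r 3]; norm_num
  rw [smul_eq_mul, h3]
  field_simp

theorem CND {N P : ℕ} (x : Fin N → EuclideanSpace ℝ (Fin P)) (hx : Function.Injective x)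
    (v : Fin N → ℝ) (hv0 : ∑ i, v i = 0) (hv : v ≠ 0) :
    ∑ i, ∑ j, v i * v j * dist (x i) (x j) < 0 := by
  classical
  set C := ∫ u in Ioi (0:ℝ), gfun u with hC
  have hCpos : 0 < C := gfun_C_pos
  have hd2 : ∀ i j : Fin N, (dist (x i) (x j))^2 = ∑ p, (x i p - x j p)^2 := by
    intro i j
    rw [EuclideanSpace.dist_eq, Real.sq_sqrt (Finset.sum_nonneg fun p _ => sq_nonneg _)]
    exact Finset.sum_congr rfl fun p _ => by rw [Real.dist_eq, sq_abs]
  set F : Fin N → Fin N → ℝ → ℝ := fun i j s =>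
    v i * v j * ((1 - Real.exp (-(s * (dist (x i) (x j))^2))) * s ^ (-(3:ℝ)/2)) with hF
  have hFint : ∀ i j : Fin N, IntegrableOn (F i j) (Ioi 0) := by
    intro i j
    by_cases hij : x i = x j
    · have hd0 : dist (x i) (x j) = 0 := by rw [hij, dist_self]
      have : F i j = fun _ => 0 := by
        funext s
        simp [hF, hd0]
      rw [this]
      exact integrableOn_zero
    · have hd : 0 < dist (x i) (x j) := dist_pos.2 (fun h => hij h)
      exact (rep_integrable hd).const_mul _
  have hpair : ∀ i j : Fin N, ∫ s in Ioi (0:ℝ), F i j s = v i * v j * dist (x i) (x j) * C := by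
    intro i j
    by_cases hij : x i = x j
    · have hd0 : dist (x i) (x j) = 0 := by rw [hij, dist_self]
      have : F i j = fun _ => 0 := by
        funext s
        simp [hF, hd0]
      rw [this, hd0]
      simp
    · have hd : 0 < dist (x i) (x j) := dist_pos.2 (fun h => hij h)
      simp only [hF]
      rw [MeasureTheory.integral_const_mul, rep_integral hd]
      ring
  have hsum : (∑ i, ∑ j, v i * v j * dist (x i) (x j)) * C
      = ∫ s in Ioi (0:ℝ), ∑ i, ∑ j, F i j s := by
    rw [integral_finset_sum Finset.univ
      (fun i _ => integrable_finset_sum Finset.univ (fun j _ => hFint i j))]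
    rw [Finset.sum_mul]
    refine Finset.sum_congr rfl fun i _ => ?_
    rw [integral_finset_sum Finset.univ (fun j _ => hFint i j), Finset.sum_mul]
    exact Finset.sum_congr rfl fun j _ => (hpair i j).symm
  set gq : ℝ → ℝ := fun s =>
    (∑ i, ∑ j, v i * v j * Real.exp (-(s * ∑ p, (x i p - x j p)^2))) * s ^ (-(3:ℝ)/2)
    with hgq
  have hptneg : ∀ s : ℝ, ∑ i, ∑ j, F i j s = -(gq s) := by
    intro s
    have h0 : ∑ i, ∑ j, v i * v j * s ^ (-(3:ℝ)/2) = 0 := by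
      have : ∀ i : Fin N, ∑ j, v i * v j * s ^ (-(3:ℝ)/2)
          = (v i * s ^ (-(3:ℝ)/2)) * ∑ j, v j := by
        intro i
        rw [Finset.mul_sum]
        exact Finset.sum_congr rfl fun j _ => by ring
      simp_rw [this, hv0, mul_zero]
      simp
    have hsplit : ∀ i j : Fin N, F i j s
        = v i * v j * s ^ (-(3:ℝ)/2)
          - v i * v j * Real.exp (-(s * ∑ p, (x i p - x j p)^2)) * s ^ (-(3:ℝ)/2) := by
      intro i j
      simp only [hF]
      rw [← hd2 i j]
      ring
    simp_rw [hsplit, Finset.sum_sub_distrib, h0, zero_sub, hgq]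
    rw [neg_inj, Finset.sum_mul]
    exact Finset.sum_congr rfl fun i _ => by rw [Finset.sum_mul]
  have hGint : IntegrableOn gq (Ioi 0) := by
    have h1 : IntegrableOn (fun s => ∑ i, ∑ j, F i j s) (Ioi (0:ℝ)) :=
      integrable_finset_sum Finset.univ
        (fun i _ => integrable_finset_sum Finset.univ (fun j _ => hFint i j))
    have h2 : IntegrableOn (fun s => -(∑ i, ∑ j, F i j s)) (Ioi (0:ℝ)) := h1.neg
    refine h2.congr_fun (fun s _ => ?_) measurableSet_Ioi
    simp only [hptneg s, neg_neg]
  have hGpos : 0 < ∫ s in Ioi (0:ℝ), gq s := by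
    rw [setIntegral_pos_iff_support_of_nonneg_ae ?_ hGint]
    · have hsub : Ioi (0:ℝ) ⊆ Function.support gq ∩ Ioi 0 := by
        intro s hs
        refine ⟨ne_of_gt ?_, hs⟩
        exact mul_pos (gauss_PD x hx v hv hs) (Real.rpow_pos_of_pos hs _)
      calc (0:ENNReal) < volume (Ioi (0:ℝ)) := by rw [Real.volume_Ioi]; exact ENNReal.zero_lt_top
        _ ≤ volume (Function.support gq ∩ Ioi 0) := measure_mono hsub
    · filter_upwards [ae_restrict_mem measurableSet_Ioi] with s hs
      exact le_of_lt (mul_pos (gauss_PD x hx v hv hs) (Real.rpow_pos_of_pos hs _))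
  have hfinal : (∑ i, ∑ j, v i * v j * dist (x i) (x j)) * C = -(∫ s in Ioi (0:ℝ), gq s) := by
    rw [hsum, ← MeasureTheory.integral_neg]
    exact setIntegral_congr_fun measurableSet_Ioi (fun s _ => by rw [hptneg s])
  nlinarith [hfinal, hGpos, hCpos]

theorem quadform {N : ℕ} {D : Matrix (Fin N) (Fin N) ℝ} (hDh : D.IsHermitian)
    (v : Fin N → ℝ) :
    ∑ i, ∑ j, v i * v j * D i j
      = ∑ k, hDh.eigenvalues k * (∑ i, hDh.eigenvectorBasis k i * v i) ^ 2 := by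
  classical
  have hentry : ∀ i j, D i j
      = ∑ k, hDh.eigenvalues k * (hDh.eigenvectorBasis k i * hDh.eigenvectorBasis k j) := by
    intro i j
    conv_lhs => rw [hDh.spectral_theorem, Unitary.conjStarAlgAut_apply]
    rw [Matrix.mul_apply]
    simp only [Matrix.mul_apply, Matrix.diagonal_apply, Matrix.star_apply,
      Matrix.IsHermitian.eigenvectorUnitary_apply, Function.comp_apply, mul_ite, mul_zero,
      ite_mul, zero_mul, Finset.sum_ite_eq, Finset.sum_ite_eq', Finset.mem_univ, if_true]
    refine Finset.sum_congr rfl fun k _ => ?_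
    simp only [star_trivial, RCLike.ofReal_real_eq_id, id_eq]
    ring
  calc ∑ i, ∑ j, v i * v j * D i j
      = ∑ i, ∑ j, ∑ k, hDh.eigenvalues k
          * (hDh.eigenvectorBasis k i * v i) * (hDh.eigenvectorBasis k j * v j) := by
        refine Finset.sum_congr rfl fun i _ => Finset.sum_congr rfl fun j _ => ?_
        rw [hentry i j, Finset.mul_sum]
        exact Finset.sum_congr rfl fun k _ => by ring
    _ = ∑ i, ∑ k, ∑ j, hDh.eigenvalues k
          * (hDh.eigenvectorBasis k i * v i) * (hDh.eigenvectorBasis k j * v j) :=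
        Finset.sum_congr rfl fun i _ => Finset.sum_comm
    _ = ∑ k, ∑ i, ∑ j, hDh.eigenvalues k
          * (hDh.eigenvectorBasis k i * v i) * (hDh.eigenvectorBasis k j * v j) :=
        Finset.sum_comm
    _ = ∑ k, hDh.eigenvalues k * (∑ i, hDh.eigenvectorBasis k i * v i) ^ 2 := by
        refine Finset.sum_congr rfl fun k _ => ?_
        rw [sq, Finset.sum_mul_sum, Finset.mul_sum]
        refine Finset.sum_congr rfl fun i _ => ?_
        rw [Finset.mul_sum]
        exact Finset.sum_congr rfl fun j _ => by ring

theorem distance_matrix_det_sign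
    {N P : ℕ} (hN : 2 ≤ N)
    (x : Fin N → EuclideanSpace ℝ (Fin P))
    (hx : Function.Injective x)
    (D : Matrix (Fin N) (Fin N) ℝ)
    (hD : ∀ i j, D i j = dist (x i) (x j)) :
    0 < (-1 : ℝ) ^ (N - 1) * D.det := by
  classical
  have hsym : D.IsHermitian := by
    ext i j
    simp only [Matrix.conjTranspose_apply, star_trivial, hD]
    exact dist_comm (x j) (x i)
  set B := hsym.eigenvectorBasis with hB
  set lam := hsym.eigenvalues with hlam
  have horth : ∀ a b : Fin N, ∑ i, B a i * B b i = if a = b then 1 else 0 := by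
    intro a b
    have := orthonormal_iff_ite.1 B.orthonormal a b
    rw [PiLp.inner_apply] at this
    simpa [RCLike.inner_apply, conj_trivial, mul_comm] using this
  have hquad := quadform hsym
  have hCND : ∀ w : Fin N → ℝ, ∑ i, w i = 0 → w ≠ 0 →
      ∑ k, lam k * (∑ i, B k i * w i) ^ 2 < 0 := by
    intro w h0 hne
    have h1 := CND x hx w h0 hne
    have h2 : ∑ i, ∑ j, w i * w j * D i j = ∑ i, ∑ j, w i * w j * dist (x i) (x j) := by
      refine Finset.sum_congr rfl fun i _ => Finset.sum_congr rfl fun j _ => by rw [hD]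
    rw [← hquad w, h2]
    exact h1
  -- at most one nonnegative eigenvalue
  have hA : ∀ a b : Fin N, a ≠ b → 0 ≤ lam a → 0 ≤ lam b → False := by
    intro a b hab ha hb
    set Sa := ∑ i, B a i with hSa
    set Sb := ∑ i, B b i with hSb
    have main : ∀ c d : ℝ, c * Sa + d * Sb = 0 → ¬(c = 0 ∧ d = 0) → False := by
      intro c d hsum0 hcd
      set w : Fin N → ℝ := fun i => c * B a i + d * B b i with hw
      have hproj : ∀ k : Fin N, ∑ i, B k i * w i
          = c * (if k = a then 1 else 0) + d * (if k = b then 1 else 0) := by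
        intro k
        have : ∑ i, B k i * w i
            = c * ∑ i, B k i * B a i + d * ∑ i, B k i * B b i := by
          rw [Finset.mul_sum, Finset.mul_sum, ← Finset.sum_add_distrib]
          exact Finset.sum_congr rfl fun i _ => by simp only [hw]; ring
        rw [this, horth, horth]
      have hw0 : ∑ i, w i = 0 := by
        simp only [hw]
        rw [Finset.sum_add_distrib, ← Finset.mul_sum, ← Finset.mul_sum, ← hSa, ← hSb]
        exact hsum0
      have hwne : w ≠ 0 := by
        intro hcon
        have hza : ∑ i, B a i * w i = 0 := by
          rw [hcon]; simp
        have hzb : ∑ i, B b i * w i = 0 := by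
          rw [hcon]; simp
        rw [hproj] at hza hzb
        simp [hab, Ne.symm hab] at hza hzb
        exact hcd ⟨hza, hzb⟩
      have hneg := hCND w hw0 hwne
      have hnonneg : 0 ≤ ∑ k, lam k * (∑ i, B k i * w i) ^ 2 := by
        refine Finset.sum_nonneg fun k _ => ?_
        rw [hproj k]
        by_cases hka : k = a
        · subst hka
          rw [if_pos rfl, if_neg hab]
          exact mul_nonneg ha (sq_nonneg _)
        · by_cases hkb : k = b
          · subst hkb
            rw [if_neg hka, if_pos rfl]
            exact mul_nonneg hb (sq_nonneg _)
          · rw [if_neg hka, if_neg hkb]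
            simp
      linarith
    by_cases hSa0 : Sa = 0
    · exact main 1 0 (by rw [hSa0]; ring) (by simp)
    · exact main Sb (-Sa) (by ring) (fun h => hSa0 (by simpa using h.2))
  -- there is a positive eigenvalue
  have hone : 0 < ∑ k, lam k * (∑ i, B k i * (fun _ => (1:ℝ)) i) ^ 2 := by
    rw [← hquad (fun _ => (1:ℝ))]
    have hnn : ∀ i j : Fin N, 0 ≤ (1:ℝ) * 1 * D i j := by
      intro i j; rw [hD]; simpa using dist_nonneg
    set i0 : Fin N := ⟨0, by omega⟩
    set i1 : Fin N := ⟨1, by omega⟩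
    have hne01 : i0 ≠ i1 := by
      intro h
      have := congrArg Fin.val h
      simp [i0, i1] at this
    have hpos01 : 0 < (1:ℝ) * 1 * D i0 i1 := by
      rw [hD]
      simpa using dist_pos.2 (fun h => hne01 (hx h))
    refine Finset.sum_pos' (fun i _ => Finset.sum_nonneg fun j _ => hnn i j)
      ⟨i0, Finset.mem_univ i0, ?_⟩
    exact Finset.sum_pos' (fun j _ => hnn i0 j) ⟨i1, Finset.mem_univ i1, hpos01⟩
  have hB' : ∃ k, 0 < lam k := by
    by_contra hcon
    push_neg at hcon
    have : ∑ k, lam k * (∑ i, B k i * (fun _ => (1:ℝ)) i) ^ 2 ≤ 0 :=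
      Finset.sum_nonpos fun k _ => mul_nonpos_of_nonpos_of_nonneg (hcon k) (sq_nonneg _)
    linarith
  obtain ⟨k0, hk0⟩ := hB'
  have hneg : ∀ k : Fin N, k ≠ k0 → lam k < 0 := by
    intro k hk
    by_contra hcon
    exact hA k k0 hk (le_of_not_gt hcon) hk0.le
  have hdet : D.det = ∏ k, lam k := by
    have := hsym.det_eq_prod_eigenvalues
    simpa using this
  rw [hdet, ← Finset.mul_prod_erase Finset.univ lam (Finset.mem_univ k0)]
  have hcard : (Finset.univ.erase k0).card = N - 1 := by
    rw [Finset.card_erase_of_mem (Finset.mem_univ k0), Finset.card_univ, Fintype.card_fin]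
  have h1 : ∏ k ∈ Finset.univ.erase k0, (-(lam k)) = (-1:ℝ)^(N-1) * ∏ k ∈ Finset.univ.erase k0, lam k := by
    calc ∏ k ∈ Finset.univ.erase k0, (-(lam k))
        = ∏ k ∈ Finset.univ.erase k0, ((-1:ℝ) * lam k) :=
          Finset.prod_congr rfl fun k _ => by ring
      _ = (∏ _k ∈ Finset.univ.erase k0, (-1:ℝ)) * ∏ k ∈ Finset.univ.erase k0, lam k :=
          Finset.prod_mul_distrib
      _ = (-1:ℝ)^(N-1) * ∏ k ∈ Finset.univ.erase k0, lam k := by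
          rw [Finset.prod_const, hcard]
  have hprodpos : 0 < ∏ k ∈ Finset.univ.erase k0, (-(lam k)) :=
    Finset.prod_pos fun k hk => neg_pos.2 (hneg k (Finset.ne_of_mem_erase hk))
  have hsq : (-1:ℝ)^(N-1) * (-1:ℝ)^(N-1) = 1 := by
    rw [← pow_add]
    exact Even.neg_one_pow ⟨N-1, by ring⟩
  have hkey : (-1:ℝ)^(N-1) * (lam k0 * ∏ k ∈ Finset.univ.erase k0, lam k)
      = lam k0 * ∏ k ∈ Finset.univ.erase k0, (-(lam k)) := by
    rw [h1]
    nlinarith [hsq]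
  rw [hkey]
  exact mul_pos hk0 hprodpos
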